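/- Let K ⊆ ℂ be a number field stable under complex conjugation, let n ≥ 1, and let μ₁, …, μₙ ∈ K be such that the vectors (μ₁, …, μₙ) and (μ̄₁, …, μ̄ₙ) in ℂⁿ are linearly independent over ℂ. Then there exists a positive integer N, depending only on μ, such that for every n × n integer matrix a = (a_{ij}) and all λ, λ' ∈ ℂ satisfying Σ_j a_{ij} μ_j = λ μ_i + λ' μ̄_i for all i, both N·λ and N·λ' are algebraic integers lying in K. -/

import Mathlib

/-!
Since `μ, μ̄` are independent, some minor `D = μ_{i₀} μ̄_{i₁} - μ_{i₁} μ̄_{i₀}` is nonzero.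
Cramer's rule applied to rows `i₀, i₁` of `a μ = λ μ + λ' μ̄` writes `λ` and `λ'` as
`ℤ`-combinations, with coefficients from `a`, of the finitely many elements `μ_j w / D` of `K`
(`w ∈ {μ_{i₀}, μ_{i₁}, μ̄_{i₀}, μ̄_{i₁}}`).
A finitely generated `ℤ`-submodule of a number field has a common denominator `N`.
-/

open Submodule

theorem LinearIndependent.exists_mul_sub_mul_ne_zero {F ι : Type*} [Field F] {u v : ι → F}
    (h : LinearIndependent F ![u, v]) : ∃ i j, u i * v j - u j * v i ≠ 0 := by
  by_contra! hminor
  obtain ⟨i, hi⟩ : ∃ i, u i ≠ 0 := by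
    by_contra! hu
    exact one_ne_zero (LinearIndependent.pair_iff.mp h 1 0 (by ext j; simp [hu])).1
  -- all minors vanish, so `v i • u - u i • v = 0`
  have := LinearIndependent.pair_iff.mp h (v i) (-u i) <| by
    ext j
    simpa [mul_comm, ← sub_eq_add_neg] using hminor j i
  exact hi (neg_eq_zero.mp this.2)

theorem eq_div_and_eq_div_of_eq_mul_add_mul {F : Type*} [Field F] {u₀ u₁ v₀ v₁ s₀ s₁ l l' : F}
    (hD : u₀ * v₁ - u₁ * v₀ ≠ 0) (h₀ : s₀ = l * u₀ + l' * v₀) (h₁ : s₁ = l * u₁ + l' * v₁) :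
    l = (s₀ * v₁ - s₁ * v₀) / (u₀ * v₁ - u₁ * v₀) ∧
      l' = (u₀ * s₁ - u₁ * s₀) / (u₀ * v₁ - u₁ * v₀) := by
  constructor <;> rw [eq_div_iff hD, h₀, h₁] <;> ring

theorem Submodule.FG.exists_isIntegral_smul {R A : Type*} [CommRing R] [NoZeroDivisors R]
    [CommRing A] [Algebra R A] [Algebra.IsAlgebraic R A] {M : Submodule R A} (hM : M.FG) :
    ∃ y ≠ (0 : R), ∀ z ∈ M, IsIntegral R (y • z) := by
  obtain ⟨s, rfl⟩ := hM
  obtain ⟨y, hy, hs⟩ := Algebra.IsAlgebraic.exists_integral_multiples R s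
  refine ⟨y, hy, fun z hz => ?_⟩
  induction hz using Submodule.span_induction with
  | mem x hx => exact hs x hx
  | zero => simpa using isIntegral_zero
  | add x z _ _ hx hz => simpa [smul_add] using hx.add hz
  | smul r x _ hx => simpa [smul_comm y r] using hx.smul r

theorem Submodule.FG.exists_pos_nat_isIntegral_nsmul {A : Type*} [CommRing A]
    [Algebra.IsAlgebraic ℤ A] {M : Submodule ℤ A} (hM : M.FG) :
    ∃ N : ℕ, 0 < N ∧ ∀ z ∈ M, IsIntegral ℤ (N • z) := by
  obtain ⟨y, hy, hM⟩ := hM.exists_isIntegral_smul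
  refine ⟨y.natAbs, Int.natAbs_pos.mpr hy, fun z hz => ?_⟩
  rw [← natCast_zsmul]
  rcases Int.natAbs_eq y with h | h
  · rw [← h]; exact hM z hz
  · rw [← neg_eq_iff_eq_neg.mpr h, neg_smul]; exact (hM z hz).neg

theorem IntermediateField.exists_pos_nat_isIntegral_mul {L : Type*} [Field L] [Algebra ℚ L]
    (K : IntermediateField ℚ L) [Algebra.IsAlgebraic ℚ K] {M : Submodule ℤ K} (hM : M.FG) :
    ∃ N : ℕ, 0 < N ∧ ∀ z ∈ M, IsIntegral ℤ ((N : L) * z) := by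
  have : Algebra.IsAlgebraic ℤ K := (IsFractionRing.comap_isAlgebraic_iff (K := ℚ)).mpr ‹_›
  obtain ⟨N, hN, hM⟩ := hM.exists_pos_nat_isIntegral_nsmul
  exact ⟨N, hN, fun z hz => by simpa using (hM z hz).algebraMap (B := L)⟩

section Cramer

variable {ι K L : Type*} [Fintype ι] [Field K] [Field L] [Algebra K L]

def cramerModule (u v : ι → K) (i₀ i₁ : ι) : Submodule ℤ K :=
  span ℤ (Set.range u) * span ℤ {u i₀, u i₁, v i₀, v i₁} *
    span ℤ {(u i₀ * v i₁ - u i₁ * v i₀)⁻¹}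

theorem cramerModule_fg (u v : ι → K) (i₀ i₁ : ι) : (cramerModule u v i₀ i₁).FG :=
  ((fg_span (Set.finite_range u)).mul (fg_span (Set.toFinite _))).mul
    (fg_span (Set.finite_singleton _))

theorem exists_mem_cramerModule {u v : ι → K} {i₀ i₁ : ι}
    (hD : u i₀ * v i₁ - u i₁ * v i₀ ≠ 0) (a : Matrix ι ι ℤ) {lam lam' : L}
    (h : ∀ i, ∑ j, (a i j : L) * algebraMap K L (u j) =
      lam * algebraMap K L (u i) + lam' * algebraMap K L (v i)) :
    (∃ z ∈ cramerModule u v i₀ i₁, algebraMap K L z = lam) ∧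
      ∃ z ∈ cramerModule u v i₀ i₁, algebraMap K L z = lam' := by
  obtain ⟨hlam, hlam'⟩ := eq_div_and_eq_div_of_eq_mul_add_mul
    (by simpa using (map_ne_zero (algebraMap K L)).mpr hD) (h i₀) (h i₁)
  set D := u i₀ * v i₁ - u i₁ * v i₀
  let S : ι → K := fun i => ∑ j, (a i j : K) * u j
  have hS : ∀ i, ∀ w ∈ ({u i₀, u i₁, v i₀, v i₁} : Set K), S i * w * D⁻¹ ∈ cramerModule u v i₀ i₁ :=
    fun i w hw => mul_mem_mul (mul_mem_mul (sum_mem fun j _ => by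
      rw [← zsmul_eq_mul]; exact smul_mem _ _ (subset_span (Set.mem_range_self j)))
      (subset_span hw)) (subset_span rfl)
  refine ⟨⟨_, sub_mem (hS i₀ (v i₁) (by simp)) (hS i₁ (v i₀) (by simp)), ?_⟩,
    ⟨_, sub_mem (hS i₁ (u i₀) (by simp)) (hS i₀ (u i₁) (by simp)), ?_⟩⟩
  · rw [hlam]; simp only [S, D, map_sub, map_mul, map_sum, map_intCast, map_inv₀]; ring
  · rw [hlam']; simp only [S, D, map_sub, map_mul, map_sum, map_intCast, map_inv₀]; ring

end Cramer

theorem stmt_5_general (K : IntermediateField ℚ ℂ) [FiniteDimensional ℚ K]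
    (hconj : ∀ x ∈ K, (starRingEnd ℂ) x ∈ K)
    (n : ℕ) (μ : Fin n → K)
    (hind : LinearIndependent ℂ
      ![(fun i => (μ i : ℂ)), (fun i => (starRingEnd ℂ) (μ i : ℂ))]) :
    ∃ N : ℕ, 0 < N ∧
      ∀ (a : Matrix (Fin n) (Fin n) ℤ) (lam lam' : ℂ),
        (∀ i, ∑ j, (a i j : ℂ) * (μ j : ℂ) =
          lam * (μ i : ℂ) + lam' * (starRingEnd ℂ) (μ i : ℂ)) →
        (IsIntegral ℤ ((N : ℂ) * lam) ∧ (N : ℂ) * lam ∈ K ∧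
          IsIntegral ℤ ((N : ℂ) * lam') ∧ (N : ℂ) * lam' ∈ K) := by
  let ν : Fin n → K := fun i => ⟨starRingEnd ℂ (μ i), hconj _ (μ i).2⟩
  obtain ⟨i₀, i₁, hD⟩ := hind.exists_mul_sub_mul_ne_zero
  replace hD : μ i₀ * ν i₁ - μ i₁ * ν i₀ ≠ 0 := fun h0 =>
    hD (by simpa [ν] using congrArg ((↑) : K → ℂ) h0)
  obtain ⟨N, hN, hNM⟩ := K.exists_pos_nat_isIntegral_mul (cramerModule_fg μ ν i₀ i₁)
  refine ⟨N, hN, fun a lam lam' h => ?_⟩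
  obtain ⟨⟨z, hz, rfl⟩, ⟨z', hz', rfl⟩⟩ := exists_mem_cramerModule hD a h
  exact ⟨hNM z hz, mul_mem (natCast_mem K N) z.2, hNM z' hz', mul_mem (natCast_mem K N) z'.2⟩

/-- Let `K ⊆ ℂ` be a number field stable under complex conjugation and `μ₁, …, μₙ ∈ K` with
`(μ₁, …, μₙ)` and `(μ̄₁, …, μ̄ₙ)` linearly independent over `ℂ`.  Then there is a positive
integer `N`, depending only on `μ`, such that for every integer matrix `a` and all
`λ, λ' ∈ ℂ` with `Σ_j a_{ij} μ_j = λ μ_i + λ' μ̄_i` for all `i`, both `N·λ` and `N·λ'` are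
algebraic integers lying in `K`. -/
theorem stmt_5 (K : IntermediateField ℚ ℂ) [FiniteDimensional ℚ K]
    (hconj : ∀ x ∈ K, (starRingEnd ℂ) x ∈ K)
    (n : ℕ) (hn : 1 ≤ n) (μ : Fin n → K)
    (hind : LinearIndependent ℂ
      ![(fun i => (μ i : ℂ)), (fun i => (starRingEnd ℂ) (μ i : ℂ))]) :
    ∃ N : ℕ, 0 < N ∧
      ∀ (a : Matrix (Fin n) (Fin n) ℤ) (lam lam' : ℂ),
        (∀ i, ∑ j, (a i j : ℂ) * (μ j : ℂ) =
          lam * (μ i : ℂ) + lam' * (starRingEnd ℂ) (μ i : ℂ)) →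
        (IsIntegral ℤ ((N : ℂ) * lam) ∧ (N : ℂ) * lam ∈ K ∧
          IsIntegral ℤ ((N : ℂ) * lam') ∧ (N : ℂ) * lam' ∈ K) :=
  stmt_5_general K hconj n μ hind
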